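/- arXiv:0709.0176 — 6 statements merged into one kernel-verified Lean document; each statement's English description precedes it below -/
import Mathlib

section
/- Let B be a locally compact Hausdorff space and let ((E_x)_{x∈B}, Γ) be a continuous family of Hilbert spaces over B. Then there exists a topology on the total space E = ⨆_{x∈B} E_x such that the projection p : E → B (sending each fiber E_x to the point x) is a continuous open surjection and such that, for every element w of the product ∏_{x∈B} E_x, w belongs to Γ if and only if the section B → E, x ↦ (x, w(x)), is continuous. -/
/-- A continuous family of Hilbert spaces over a topological space `B` (Dixmier):
a family of complex Hilbert spaces `E x` together with a linear subspace `Γ` of the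
product `∀ x, E x` satisfying the three axioms of Definition 2.3. -/
structure ContinuousFamilyOfHilbertSpaces (B : Type*) [TopologicalSpace B]
    (E : B → Type*) [∀ x, NormedAddCommGroup (E x)] [∀ x, InnerProductSpace ℂ (E x)]
    [∀ x, CompleteSpace (E x)] : Type _ where
  /-- The linear subspace of sections. -/
  Γ : Submodule ℂ (∀ x, E x)
  /-- (1) sections pass through every vector of every fiber -/
  exists_section : ∀ (x : B) (v : E x), ∃ s ∈ Γ, s x = v
  /-- (2) inner products of sections are continuous -/
  continuous_inner : ∀ s₁ ∈ Γ, ∀ s₂ ∈ Γ, Continuous fun x : B => (inner ℂ (s₁ x) (s₂ x) : ℂ)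
  /-- (3) local uniform approximability by sections implies being a section -/
  mem_of_approx : ∀ w : ∀ x, E x,
    (∀ x : B, ∀ ε : ℝ, 0 < ε → ∃ U ∈ nhds x, ∃ s ∈ Γ, ∀ x' ∈ U, ‖s x' - w x'‖ < ε) →
    w ∈ Γ

/-- The tubular set `B(V, s, ε)` in the total space `Σ x, E x`. -/
def tubularSet {B : Type*} (E : B → Type*) [∀ x, NormedAddCommGroup (E x)]
    (V : Set B) (s : ∀ x, E x) (ε : ℝ) : Set (Σ x, E x) :=
  {e | e.1 ∈ V ∧ ‖s e.1 - e.2‖ < ε}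

/-- The collection of all tubular sets `B(V, s, ε)` with `V ⊆ B` open, `s ∈ Γ`, `ε > 0`. -/
def tubularSets {B : Type*} [TopologicalSpace B] {E : B → Type*}
    [∀ x, NormedAddCommGroup (E x)] [∀ x, InnerProductSpace ℂ (E x)]
    [∀ x, CompleteSpace (E x)] (F : ContinuousFamilyOfHilbertSpaces B E) :
    Set (Set (Σ x, E x)) :=
  {W | ∃ V : Set B, IsOpen V ∧ ∃ s ∈ F.Γ, ∃ ε : ℝ, 0 < ε ∧ W = tubularSet E V s ε}

open TopologicalSpace in
theorem aux_norm_continuous {B : Type*} [TopologicalSpace B] {E : B → Type*}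
    [∀ x, NormedAddCommGroup (E x)] [∀ x, InnerProductSpace ℂ (E x)]
    [∀ x, CompleteSpace (E x)] (F : ContinuousFamilyOfHilbertSpaces B E)
    {s : ∀ x, E x} (hs : s ∈ F.Γ) : Continuous fun x => ‖s x‖ := by
  have h := F.continuous_inner s hs s hs
  have heq : (fun x => ‖s x‖) = fun x => Real.sqrt (Complex.re (inner ℂ (s x) (s x))) := by
    funext x
    exact_mod_cast norm_eq_sqrt_re_inner (𝕜 := ℂ) (s x)
  rw [heq]
  exact Real.continuous_sqrt.comp (Complex.continuous_re.comp h)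

open TopologicalSpace in
theorem aux_basis {B : Type*} [TopologicalSpace B] {E : B → Type*}
    [∀ x, NormedAddCommGroup (E x)] [∀ x, InnerProductSpace ℂ (E x)]
    [∀ x, CompleteSpace (E x)] (F : ContinuousFamilyOfHilbertSpaces B E) :
    @IsTopologicalBasis _ (generateFrom (tubularSets F)) (tubularSets F) := by
  refine @TopologicalSpace.IsTopologicalBasis.mk _ (TopologicalSpace.generateFrom (tubularSets F)) _ ?_ ?_ rfl
  · rintro t₁ ⟨V₁, hV₁, s₁, hs₁, ε₁, hε₁, rfl⟩ t₂ ⟨V₂, hV₂, s₂, hs₂, ε₂, hε₂, rfl⟩ e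
      ⟨⟨heV₁, he₁⟩, ⟨heV₂, he₂⟩⟩
    obtain ⟨s, hs, hsx⟩ := F.exists_section e.1 e.2
    set δ₁ := ε₁ - ‖s₁ e.1 - e.2‖ with hδ₁def
    set δ₂ := ε₂ - ‖s₂ e.1 - e.2‖ with hδ₂def
    have hδ₁ : 0 < δ₁ := by simp [hδ₁def]; linarith
    have hδ₂ : 0 < δ₂ := by simp [hδ₂def]; linarith
    have hc₁ : Continuous fun x => ‖s₁ x - s x‖ := by
      have := aux_norm_continuous F (Submodule.sub_mem _ hs₁ hs)
      simpa using this
    have hc₂ : Continuous fun x => ‖s₂ x - s x‖ := by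
      have := aux_norm_continuous F (Submodule.sub_mem _ hs₂ hs)
      simpa using this
    set U₁ : Set B := {x | ‖s₁ x - s x‖ < ‖s₁ e.1 - e.2‖ + δ₁ / 2} with hU₁def
    set U₂ : Set B := {x | ‖s₂ x - s x‖ < ‖s₂ e.1 - e.2‖ + δ₂ / 2} with hU₂def
    have hU₁ : IsOpen U₁ := isOpen_Iio.preimage hc₁
    have hU₂ : IsOpen U₂ := isOpen_Iio.preimage hc₂
    set ε := min δ₁ δ₂ / 2 with hεdef
    have hε : 0 < ε := by positivity
    refine ⟨tubularSet E (V₁ ∩ V₂ ∩ U₁ ∩ U₂) s ε,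
      ⟨_, ((hV₁.inter hV₂).inter hU₁).inter hU₂, s, hs, ε, hε, rfl⟩, ?_, ?_⟩
    · refine ⟨⟨⟨⟨heV₁, heV₂⟩, ?_⟩, ?_⟩, by simp [hsx, hε]⟩
      · simp only [hU₁def, Set.mem_setOf_eq, hsx]; linarith
      · simp only [hU₂def, Set.mem_setOf_eq, hsx]; linarith
    · rintro ⟨x', v'⟩ ⟨⟨⟨⟨hx₁, hx₂⟩, hxU₁⟩, hxU₂⟩, hv⟩
      simp only [hU₁def, hU₂def, Set.mem_setOf_eq] at hxU₁ hxU₂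
      have h₁ : ‖s₁ x' - v'‖ ≤ ‖s₁ x' - s x'‖ + ‖s x' - v'‖ := norm_sub_le_norm_sub_add_norm_sub _ _ _
      have h₂ : ‖s₂ x' - v'‖ ≤ ‖s₂ x' - s x'‖ + ‖s x' - v'‖ := norm_sub_le_norm_sub_add_norm_sub _ _ _
      have hm₁ : ε ≤ δ₁ / 2 := by have := min_le_left δ₁ δ₂; rw [hεdef]; linarith
      have hm₂ : ε ≤ δ₂ / 2 := by have := min_le_right δ₁ δ₂; rw [hεdef]; linarith
      constructor
      · exact ⟨hx₁, by dsimp only at h₁ hv ⊢; linarith⟩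
      · exact ⟨hx₂, by dsimp only at h₂ hv ⊢; linarith⟩
  · apply Set.eq_univ_of_forall
    intro e
    obtain ⟨n, hn⟩ := exists_nat_gt ‖e.2‖
    refine Set.mem_sUnion.2 ⟨tubularSet E Set.univ 0 (n + 1),
      ⟨Set.univ, isOpen_univ, 0, Submodule.zero_mem _, n + 1, by positivity, rfl⟩,
      Set.mem_univ _, ?_⟩
    simp only [tubularSet, Pi.zero_apply, zero_sub, norm_neg]
    linarith

/-- There exists a topology on the total space `E = Σ x, E x` making the projection
`p : E → B` a continuous open surjection, and such that `Γ` is exactly the space of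
continuous sections of `p`. -/
theorem exists_topology_projection_continuous_open_surjective_sections
    {B : Type*} [TopologicalSpace B] [LocallyCompactSpace B] [T2Space B]
    {E : B → Type*} [∀ x, NormedAddCommGroup (E x)] [∀ x, InnerProductSpace ℂ (E x)]
    [∀ x, CompleteSpace (E x)]
    (F : ContinuousFamilyOfHilbertSpaces B E) :
    ∃ τ : TopologicalSpace (Σ x, E x),
      @Continuous _ _ τ _ (fun e : Σ x, E x => e.1) ∧
      @IsOpenMap _ _ τ _ (fun e : Σ x, E x => e.1) ∧
      Function.Surjective (fun e : Σ x, E x => e.1) ∧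
      ∀ w : ∀ x, E x,
        w ∈ F.Γ ↔ @Continuous _ _ _ τ (fun x : B => (⟨x, w x⟩ : Σ x, E x)) := by
  classical
  set τ := TopologicalSpace.generateFrom (tubularSets F) with hτ
  have hbasis := aux_basis F
  refine ⟨τ, ?_, ?_, ?_, ?_⟩
  · -- continuity of the projection
    rw [@continuous_def]
    intro V hV
    have : (fun e : Σ x, E x => e.1) ⁻¹' V = ⋃ n : ℕ, tubularSet E V 0 (n + 1) := by
      ext e
      simp only [Set.mem_preimage, Set.mem_iUnion, tubularSet, Set.mem_setOf_eq,
        Pi.zero_apply, zero_sub, norm_neg]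
      constructor
      · intro h
        obtain ⟨n, hn⟩ := exists_nat_gt ‖e.2‖
        exact ⟨n, h, by linarith⟩
      · rintro ⟨n, h, -⟩; exact h
    rw [this]
    exact isOpen_iUnion fun n => TopologicalSpace.GenerateOpen.basic _
      ⟨V, hV, 0, Submodule.zero_mem _, n + 1, by positivity, rfl⟩
  · -- openness of the projection
    intro U hU
    obtain ⟨S, hS, rfl⟩ := hbasis.open_eq_sUnion hU
    rw [Set.sUnion_eq_biUnion, Set.image_iUnion₂]
    apply isOpen_biUnion
    intro t ht
    obtain ⟨V, hV, s, hs, ε, hε, rfl⟩ := hS ht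
    have : (fun e : Σ x, E x => e.1) '' tubularSet E V s ε = V := by
      ext x
      constructor
      · rintro ⟨e, ⟨heV, -⟩, rfl⟩; exact heV
      · intro hx; exact ⟨⟨x, s x⟩, ⟨hx, by simp [hε]⟩, rfl⟩
    rw [this]; exact hV
  · -- surjectivity
    intro x; exact ⟨⟨x, 0⟩, rfl⟩
  · intro w
    constructor
    · -- w ∈ Γ → section continuous
      intro hw
      rw [hτ, continuous_generateFrom_iff]
      rintro t ⟨V, hV, s, hs, ε, hε, rfl⟩
      have : (fun x : B => (⟨x, w x⟩ : Σ x, E x)) ⁻¹' tubularSet E V s ε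
          = V ∩ {x | ‖s x - w x‖ < ε} := rfl
      rw [this]
      have hc : Continuous fun x => ‖s x - w x‖ := by
        have := aux_norm_continuous F (Submodule.sub_mem _ hs hw)
        simpa using this
      exact hV.inter (isOpen_Iio.preimage hc)
    · -- section continuous → w ∈ Γ
      intro hcont
      apply F.mem_of_approx
      intro x ε hε
      obtain ⟨s, hs, hsx⟩ := F.exists_section x (w x)
      have hW : @IsOpen _ τ (tubularSet E Set.univ s ε) :=
        TopologicalSpace.GenerateOpen.basic _
          ⟨Set.univ, isOpen_univ, s, hs, ε, hε, rfl⟩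
      refine ⟨(fun x : B => (⟨x, w x⟩ : Σ x, E x)) ⁻¹' tubularSet E Set.univ s ε,
        (hW.preimage hcont).mem_nhds ⟨Set.mem_univ _, by simp [hsx, hε]⟩, s, hs, ?_⟩
      intro x' hx'
      exact hx'.2
end

section
/- Let B be a locally compact Hausdorff space and let ((E_x)_{x∈B}, Γ) be a continuous family of Hilbert spaces over B. Then the collection of all tubular sets B(V,s,ε) (for V ⊆ B open, s ∈ Γ, ε > 0) covers the total space E, and for any two tubular sets W₁ = B(V₁,s₁,ε₁) and W₂ = B(V₂,s₂,ε₂) and any point e ∈ W₁ ∩ W₂ there exists a tubular set W with e ∈ W ⊆ W₁ ∩ W₂. Consequently, the tubular sets form a topological basis of the topology they generate on E. -/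
lemma cfhs_continuous_norm {B : Type*} [TopologicalSpace B] {E : B → Type*}
    [∀ x, NormedAddCommGroup (E x)] [∀ x, InnerProductSpace ℂ (E x)]
    [∀ x, CompleteSpace (E x)] (F : ContinuousFamilyOfHilbertSpaces B E)
    {t : ∀ x, E x} (ht : t ∈ F.Γ) : Continuous fun x => ‖t x‖ := by
  have h := F.continuous_inner t ht t ht
  have : (fun x => ‖t x‖) = fun x =>
      Real.sqrt (Complex.re (inner ℂ (t x) (t x) : ℂ)) := by
    funext x
    exact norm_eq_sqrt_re_inner (𝕜 := ℂ) (t x)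
  rw [this]
  exact (Complex.continuous_re.comp h).sqrt

/-- The tubular sets cover the total space, are closed (up to shrinking) under pairwise
intersection at each point, and hence form a topological basis of the topology they
generate on the total space. -/
theorem tubularSets_isTopologicalBasis
    {B : Type*} [TopologicalSpace B] [LocallyCompactSpace B] [T2Space B]
    {E : B → Type*} [∀ x, NormedAddCommGroup (E x)] [∀ x, InnerProductSpace ℂ (E x)]
    [∀ x, CompleteSpace (E x)]
    (F : ContinuousFamilyOfHilbertSpaces B E) :
    (∀ e : Σ x, E x, ∃ W ∈ tubularSets F, e ∈ W) ∧
    (∀ W₁ ∈ tubularSets F, ∀ W₂ ∈ tubularSets F, ∀ e ∈ W₁ ∩ W₂,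
        ∃ W ∈ tubularSets F, e ∈ W ∧ W ⊆ W₁ ∩ W₂) ∧
    @TopologicalSpace.IsTopologicalBasis _
      (TopologicalSpace.generateFrom (tubularSets F)) (tubularSets F) := by
  have hcover : ∀ e : Σ x, E x, ∃ W ∈ tubularSets F, e ∈ W := by
    rintro ⟨x, v⟩
    obtain ⟨s, hs, hsx⟩ := F.exists_section x v
    refine ⟨tubularSet E Set.univ s 1, ⟨Set.univ, isOpen_univ, s, hs, 1, one_pos, rfl⟩,
      Set.mem_univ x, ?_⟩
    simp [hsx]
  have hinter : ∀ W₁ ∈ tubularSets F, ∀ W₂ ∈ tubularSets F, ∀ e ∈ W₁ ∩ W₂,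
      ∃ W ∈ tubularSets F, e ∈ W ∧ W ⊆ W₁ ∩ W₂ := by
    rintro W₁ ⟨V₁, hV₁, s₁, hs₁, ε₁, hε₁, rfl⟩ W₂ ⟨V₂, hV₂, s₂, hs₂, ε₂, hε₂, rfl⟩
      ⟨x, v⟩ ⟨⟨hxV₁, hd₁⟩, hxV₂, hd₂⟩
    obtain ⟨s, hs, hsx⟩ := F.exists_section x v
    set δ₁ : ℝ := ε₁ - ‖s₁ x - v‖ with hδ₁
    set δ₂ : ℝ := ε₂ - ‖s₂ x - v‖ with hδ₂
    have hδ₁pos : 0 < δ₁ := by simpa [hδ₁] using hd₁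
    have hδ₂pos : 0 < δ₂ := by simpa [hδ₂] using hd₂
    set ε : ℝ := min δ₁ δ₂ / 2 with hε
    have hεpos : 0 < ε := by positivity
    have hεδ₁ : ε < δ₁ := by
      have := min_le_left δ₁ δ₂; simp only [hε]; linarith
    have hεδ₂ : ε < δ₂ := by
      have := min_le_right δ₁ δ₂; simp only [hε]; linarith
    have hcont₁ : Continuous fun x' => ‖(s - s₁) x'‖ :=
      cfhs_continuous_norm F (Submodule.sub_mem _ hs hs₁)
    have hcont₂ : Continuous fun x' => ‖(s - s₂) x'‖ :=
      cfhs_continuous_norm F (Submodule.sub_mem _ hs hs₂)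
    set V : Set B := V₁ ∩ V₂ ∩ {x' | ‖(s - s₁) x'‖ < ε₁ - ε} ∩
      {x' | ‖(s - s₂) x'‖ < ε₂ - ε} with hV
    have hVopen : IsOpen V := by
      refine (((hV₁.inter hV₂).inter ?_).inter ?_)
      · exact isOpen_lt hcont₁ continuous_const
      · exact isOpen_lt hcont₂ continuous_const
    have hxV : x ∈ V := by
      refine ⟨⟨⟨hxV₁, hxV₂⟩, ?_⟩, ?_⟩
      · show ‖s x - s₁ x‖ < ε₁ - ε
        rw [hsx]
        have : ‖v - s₁ x‖ = ‖s₁ x - v‖ := norm_sub_rev _ _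
        rw [this]; simp only [hδ₁] at hεδ₁; linarith
      · show ‖s x - s₂ x‖ < ε₂ - ε
        rw [hsx]
        have : ‖v - s₂ x‖ = ‖s₂ x - v‖ := norm_sub_rev _ _
        rw [this]; simp only [hδ₂] at hεδ₂; linarith
    refine ⟨tubularSet E V s ε, ⟨V, hVopen, s, hs, ε, hεpos, rfl⟩,
      ⟨hxV, by simp [hsx, hεpos]⟩, ?_⟩
    rintro ⟨y, w⟩ ⟨⟨⟨⟨hy₁, hy₂⟩, hn₁⟩, hn₂⟩, hnw⟩
    simp only [Set.mem_setOf_eq] at hn₁ hn₂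
    constructor
    · refine ⟨hy₁, ?_⟩
      calc ‖s₁ y - w‖ ≤ ‖s₁ y - s y‖ + ‖s y - w‖ := norm_sub_le_norm_sub_add_norm_sub _ _ _
        _ < (ε₁ - ε) + ε := by
            have : ‖s₁ y - s y‖ = ‖(s - s₁) y‖ := by
              rw [Pi.sub_apply, norm_sub_rev]
            rw [this]; exact add_lt_add hn₁ hnw
        _ = ε₁ := by ring
    · refine ⟨hy₂, ?_⟩
      calc ‖s₂ y - w‖ ≤ ‖s₂ y - s y‖ + ‖s y - w‖ := norm_sub_le_norm_sub_add_norm_sub _ _ _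
        _ < (ε₂ - ε) + ε := by
            have : ‖s₂ y - s y‖ = ‖(s - s₂) y‖ := by
              rw [Pi.sub_apply, norm_sub_rev]
            rw [this]; exact add_lt_add hn₂ hnw
        _ = ε₂ := by ring
  refine ⟨hcover, hinter, ?_⟩
  letI : TopologicalSpace (Σ x, E x) := TopologicalSpace.generateFrom (tubularSets F)
  refine TopologicalSpace.IsTopologicalBasis.mk ?_ ?_ rfl
  · intro W₁ h₁ W₂ h₂ e he
    obtain ⟨W, hW, heW, hsub⟩ := hinter W₁ h₁ W₂ h₂ e he
    exact ⟨W, hW, heW, hsub⟩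
  · apply Set.eq_univ_of_forall
    intro e
    obtain ⟨W, hW, heW⟩ := hcover e
    exact ⟨W, hW, heW⟩
end

section
/- Let B be a locally compact Hausdorff space, let ((E_x)_{x∈B}, Γ) be a continuous family of Hilbert spaces over B, and endow the total space E with the topology generated by the tubular sets. If w ∈ ∏_{x∈B} E_x is such that the section B → E, x ↦ (x, w(x)), is continuous, then w ∈ Γ. -/
/-- With the total space endowed with the topology generated by the tubular sets,
every continuous section of the projection belongs to `Γ`. -/
theorem mem_Gamma_of_continuous_section
    {B : Type*} [TopologicalSpace B] [LocallyCompactSpace B] [T2Space B]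
    {E : B → Type*} [∀ x, NormedAddCommGroup (E x)] [∀ x, InnerProductSpace ℂ (E x)]
    [∀ x, CompleteSpace (E x)]
    (F : ContinuousFamilyOfHilbertSpaces B E)
    (w : ∀ x, E x)
    (hw : @Continuous _ _ _ (TopologicalSpace.generateFrom (tubularSets F))
      (fun x : B => (⟨x, w x⟩ : Σ x, E x))) :
    w ∈ F.Γ := by
  apply F.mem_of_approx
  intro x ε hε
  obtain ⟨s, hs, hsx⟩ := F.exists_section x (w x)
  have hopen : @IsOpen _ (TopologicalSpace.generateFrom (tubularSets F))
      (tubularSet E Set.univ s ε) :=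
    TopologicalSpace.isOpen_generateFrom_of_mem
      ⟨Set.univ, isOpen_univ, s, hs, ε, hε, rfl⟩
  have hU : IsOpen ((fun x : B => (⟨x, w x⟩ : Σ x, E x)) ⁻¹' tubularSet E Set.univ s ε) :=
    @Continuous.isOpen_preimage _ _ _ (TopologicalSpace.generateFrom (tubularSets F))
      _ hw _ hopen
  refine ⟨_, hU.mem_nhds ⟨Set.mem_univ x, by simp [hsx, hε]⟩, s, hs, ?_⟩
  intro x' hx'
  exact hx'.2
end

section
/- Let B be a locally compact Hausdorff space, let ((E_x)_{x∈B}, Γ) be a continuous family of Hilbert spaces over B, and endow the total space E with the topology generated by the tubular sets. Then the projection p : E → B is continuous, open, and surjective. -/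
section AuxLemmas

variable {B : Type*} [TopologicalSpace B]
    {E : B → Type*} [∀ x, NormedAddCommGroup (E x)] [∀ x, InnerProductSpace ℂ (E x)]
    [∀ x, CompleteSpace (E x)]

lemma ContinuousFamilyOfHilbertSpaces.norm_section_continuous
    (F : ContinuousFamilyOfHilbertSpaces B E) {t : ∀ x, E x} (ht : t ∈ F.Γ) :
    Continuous fun x => ‖t x‖ := by
  have h := F.continuous_inner t ht t ht
  have h2 : Continuous fun x => Real.sqrt (Complex.re (inner ℂ (t x) (t x) : ℂ)) :=
    Real.continuous_sqrt.comp (Complex.continuous_re.comp h)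
  convert h2 using 2 with x
  exact norm_eq_sqrt_re_inner (𝕜 := ℂ) (t x)

/-- Shrinking lemma: a tubular set around a nearby section inside a given tubular set. -/
lemma ContinuousFamilyOfHilbertSpaces.shrink
    (F : ContinuousFamilyOfHilbertSpaces B E) {s₀ s : ∀ x, E x}
    (hs₀ : s₀ ∈ F.Γ) (hs : s ∈ F.Γ) {V₀ : Set B} (hV₀ : IsOpen V₀) {x : B}
    (hxV : x ∈ V₀) {ε₀ : ℝ} (hr : ‖s₀ x - s x‖ < ε₀) :
    ∃ V : Set B, ∃ ε : ℝ, IsOpen V ∧ x ∈ V ∧ 0 < ε ∧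
      tubularSet E V s ε ⊆ tubularSet E V₀ s₀ ε₀ := by
  set r : ℝ := ‖s₀ x - s x‖ with hrdef
  set δ : ℝ := (ε₀ - r) / 2 with hδdef
  have hδ : 0 < δ := by
    have : 0 < ε₀ - r := by linarith
    positivity
  have hdiff : s₀ - s ∈ F.Γ := sub_mem hs₀ hs
  have hcont : Continuous fun x' => ‖(s₀ - s) x'‖ := F.norm_section_continuous hdiff
  refine ⟨V₀ ∩ (fun x' => ‖(s₀ - s) x'‖) ⁻¹' Set.Iio (r + δ), δ,
    hV₀.inter (isOpen_Iio.preimage hcont), ⟨hxV, ?_⟩, hδ, ?_⟩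
  · show ‖(s₀ - s) x‖ < r + δ
    have : (s₀ - s) x = s₀ x - s x := rfl
    rw [this]; linarith
  · rintro ⟨x', v⟩ ⟨⟨hx'V₀, hx'near⟩, hv⟩
    refine ⟨hx'V₀, ?_⟩
    have hnear : ‖s₀ x' - s x'‖ < r + δ := hx'near
    have htri : ‖s₀ x' - v‖ ≤ ‖s₀ x' - s x'‖ + ‖s x' - v‖ := norm_sub_le_norm_sub_add_norm_sub _ _ _
    have : ‖s x' - v‖ < δ := hv
    have : ‖s₀ x' - v‖ < r + δ + δ := by linarith
    have hε : r + δ + δ = ε₀ := by rw [hδdef]; ring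
    linarith [hε ▸ this]

/-- Every point of a generated-open set lies in a tubular set through it contained in the set. -/
lemma ContinuousFamilyOfHilbertSpaces.exists_tubular_subset
    (F : ContinuousFamilyOfHilbertSpaces B E) {W : Set (Σ x, E x)}
    (hW : TopologicalSpace.GenerateOpen (tubularSets F) W) :
    ∀ e ∈ W, ∃ V : Set B, ∃ s : ∀ x, E x, ∃ ε : ℝ,
      IsOpen V ∧ e.1 ∈ V ∧ s ∈ F.Γ ∧ s e.1 = e.2 ∧ 0 < ε ∧ tubularSet E V s ε ⊆ W := by
  induction hW with
  | basic W hWmem =>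
    rintro e he
    obtain ⟨V₀, hV₀, s₀, hs₀, ε₀, hε₀, rfl⟩ := hWmem
    obtain ⟨s, hs, hse⟩ := F.exists_section e.1 e.2
    obtain ⟨he1, he2⟩ := he
    have hr : ‖s₀ e.1 - s e.1‖ < ε₀ := by rw [hse]; exact he2
    obtain ⟨V, ε, hVopen, hxV, hε, hsub⟩ := F.shrink hs₀ hs hV₀ he1 hr
    exact ⟨V, s, ε, hVopen, hxV, hs, hse, hε, hsub⟩
  | univ =>
    rintro e -
    obtain ⟨s, hs, hse⟩ := F.exists_section e.1 e.2
    exact ⟨Set.univ, s, 1, isOpen_univ, trivial, hs, hse, one_pos, Set.subset_univ _⟩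
  | inter W₁ W₂ _ _ ih₁ ih₂ =>
    rintro e ⟨he₁, he₂⟩
    obtain ⟨V₁, s₁, ε₁, hV₁, hx₁, hs₁, hse₁, hε₁, hsub₁⟩ := ih₁ e he₁
    obtain ⟨V₂, s₂, ε₂, hV₂, hx₂, hs₂, hse₂, hε₂, hsub₂⟩ := ih₂ e he₂
    have hr : ‖s₂ e.1 - s₁ e.1‖ < ε₂ := by rw [hse₁, hse₂, sub_self, norm_zero]; exact hε₂
    obtain ⟨V₂', ε₂', hV₂', hx₂', hε₂', hsub₂'⟩ := F.shrink hs₂ hs₁ hV₂ hx₂ hr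
    refine ⟨V₁ ∩ V₂', s₁, min ε₁ ε₂', hV₁.inter hV₂', ⟨hx₁, hx₂'⟩, hs₁, hse₁,
      lt_min hε₁ hε₂', ?_⟩
    rintro ⟨x', v⟩ ⟨⟨hxV₁, hxV₂'⟩, hv⟩
    have hv' : ‖s₁ x' - v‖ < min ε₁ ε₂' := hv
    exact ⟨hsub₁ ⟨hxV₁, hv'.trans_le (min_le_left _ _)⟩,
      hsub₂ (hsub₂' ⟨hxV₂', hv'.trans_le (min_le_right _ _)⟩)⟩
  | sUnion S _ ih =>
    rintro e he
    obtain ⟨t, htS, het⟩ := he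
    obtain ⟨V, s, ε, h1, h2, h3, h4, h5, h6⟩ := ih t htS e het
    exact ⟨V, s, ε, h1, h2, h3, h4, h5, h6.trans (Set.subset_sUnion_of_mem htS)⟩

end AuxLemmas

/-- With the total space endowed with the topology generated by the tubular sets,
the projection `p : Σ x, E x → B` is continuous, open and surjective. -/
theorem projection_continuous_isOpenMap_surjective
    {B : Type*} [TopologicalSpace B] [LocallyCompactSpace B] [T2Space B]
    {E : B → Type*} [∀ x, NormedAddCommGroup (E x)] [∀ x, InnerProductSpace ℂ (E x)]
    [∀ x, CompleteSpace (E x)]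
    (F : ContinuousFamilyOfHilbertSpaces B E) :
    @Continuous _ _ (TopologicalSpace.generateFrom (tubularSets F)) _
      (fun e : Σ x, E x => e.1) ∧
    @IsOpenMap _ _ (TopologicalSpace.generateFrom (tubularSets F)) _
      (fun e : Σ x, E x => e.1) ∧
    Function.Surjective (fun e : Σ x, E x => e.1) := by
  letI τ : TopologicalSpace (Σ x, E x) := TopologicalSpace.generateFrom (tubularSets F)
  have hsurj : Function.Surjective (fun e : Σ x, E x => e.1) := fun x => ⟨⟨x, 0⟩, rfl⟩
  refine ⟨?_, ?_, hsurj⟩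
  · rw [continuous_def]
    intro V hV
    rw [isOpen_iff_forall_mem_open]
    intro e he
    obtain ⟨s, hs, hse⟩ := F.exists_section e.1 e.2
    refine ⟨tubularSet E V s 1, ?_, ?_, ?_⟩
    · rintro ⟨x', v⟩ ⟨hx', -⟩; exact hx'
    · exact TopologicalSpace.GenerateOpen.basic _ ⟨V, hV, s, hs, 1, one_pos, rfl⟩
    · exact ⟨he, by rw [hse, sub_self, norm_zero]; exact one_pos⟩
  · intro U hU
    rw [isOpen_iff_forall_mem_open]
    rintro x ⟨e, heU, rfl⟩
    obtain ⟨V, s, ε, hVopen, hxV, hs, hse, hε, hsub⟩ := F.exists_tubular_subset hU e heU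
    refine ⟨V, fun x' hx' => ⟨⟨x', s x'⟩, hsub ⟨hx', by rw [sub_self, norm_zero]; exact hε⟩, rfl⟩,
      hVopen, hxV⟩
end

section
/- Let B be a locally compact Hausdorff space and let ((E_x)_{x∈B}, Γ) be a continuous family of finite-dimensional Hilbert spaces over B. Then the dimension function d : B → ℕ, d(x) = dim_ℂ E_x, is lower semicontinuous on B; equivalently, for every natural number n the set {x ∈ B : dim_ℂ E_x ≥ n} is open in B. -/
/-- For a continuous family of finite dimensional Hilbert spaces, the dimension function
`x ↦ dim_ℂ E_x` is lower semicontinuous; equivalently, for every `n` the set of points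
whose fiber has dimension at least `n` is open. -/
theorem dimension_lowerSemicontinuous
    {B : Type*} [TopologicalSpace B] [LocallyCompactSpace B] [T2Space B]
    {E : B → Type*} [∀ x, NormedAddCommGroup (E x)] [∀ x, InnerProductSpace ℂ (E x)]
    [∀ x, CompleteSpace (E x)] [∀ x, FiniteDimensional ℂ (E x)]
    (F : ContinuousFamilyOfHilbertSpaces B E) :
    LowerSemicontinuous (fun x : B => Module.finrank ℂ (E x)) ∧
    ∀ n : ℕ, IsOpen {x : B | n ≤ Module.finrank ℂ (E x)} := by
  have key : ∀ n : ℕ, IsOpen {x : B | n ≤ Module.finrank ℂ (E x)} := by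
    intro n
    rw [isOpen_iff_mem_nhds]
    intro x₀ hx₀
    simp only [Set.mem_setOf_eq] at hx₀
    -- orthonormal family of size n in the fiber at x₀
    set b : Fin n → E x₀ := fun i =>
      (stdOrthonormalBasis ℂ (E x₀)) (Fin.castLE hx₀ i) with hb
    -- choose sections through each b i
    choose s hsΓ hsx₀ using fun i => F.exists_section x₀ (b i)
    -- Gram matrix
    set G : B → Matrix (Fin n) (Fin n) ℂ :=
      fun x => Matrix.of fun i j => (inner ℂ (s i x) (s j x) : ℂ) with hG
    have hGcont : Continuous fun x => (G x).det := by
      apply Continuous.matrix_det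
      apply continuous_matrix
      intro i j
      exact F.continuous_inner _ (hsΓ i) _ (hsΓ j)
    have hGx₀ : G x₀ = 1 := by
      ext i j
      simp only [hG, Matrix.of_apply, hsx₀, hb, Matrix.one_apply]
      have := (stdOrthonormalBasis ℂ (E x₀)).orthonormal
      rw [orthonormal_iff_ite] at this
      rw [this]
      simp [Fin.castLE_inj]
    have hdet : (G x₀).det ≠ 0 := by rw [hGx₀]; simp
    have hopen : IsOpen {x : B | (G x).det ≠ 0} :=
      isOpen_compl_iff.mpr (isClosed_singleton.preimage hGcont)
    refine Filter.mem_of_superset (hopen.mem_nhds hdet) ?_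
    intro x hx
    simp only [Set.mem_setOf_eq] at hx ⊢
    -- linear independence of s i x from invertible Gram matrix
    have hli : LinearIndependent ℂ fun i => s i x := by
      rw [Fintype.linearIndependent_iff]
      intro c hc i
      have hmv : (G x).mulVec c = 0 := by
        funext j
        have : (inner ℂ (s j x) (∑ i, c i • s i x) : ℂ) = 0 := by rw [hc]; simp
        rw [inner_sum] at this
        simp only [inner_smul_right] at this
        simpa [Matrix.mulVec, dotProduct, hG, mul_comm] using this
      have hinj := Matrix.mulVec_injective_iff_isUnit.2
        ((Matrix.isUnit_iff_isUnit_det (G x)).2 (isUnit_iff_ne_zero.2 hx))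
      have := hinj (show (G x).mulVec c = (G x).mulVec 0 by simp [hmv])
      exact congrFun this i
    exact hli.fintype_card_le_finrank.trans_eq' (by simp)
  refine ⟨?_, key⟩
  rw [lowerSemicontinuous_iff_isOpen_preimage]
  intro y
  have : (fun x : B => Module.finrank ℂ (E x)) ⁻¹' Set.Ioi y
      = {x : B | y + 1 ≤ Module.finrank ℂ (E x)} := by
    ext x; simp only [Set.mem_preimage, Set.mem_Ioi, Set.mem_setOf_eq]; omega
  rw [this]
  exact key (y + 1)
end

section
/- Let B be a locally compact Hausdorff space, let I be an index type, and for each i ∈ I let ((E^i_x)_{x∈B}, Γ_i) be a continuous family of finite-dimensional Hilbert spaces over B. Assume that the family of supports {supp_o(E^i)}_{i∈I}, where supp_o(E^i) = {x ∈ B : E^i_x ≠ {0}}, is locally finite in B. Then: (a) every point x ∈ B lies in only finitely many of the supports, so that every element of ∏_{i∈I} E^i_x has only finitely many nonzero components and the Hilbert-space ℓ²-direct sum F_x = ⊕_{i∈I} E^i_x coincides with the full product and is finite dimensional; and (b) setting Γ = {s ∈ ∏_{x∈B} F_x : for every i ∈ I the i-th component x ↦ s(x)_i belongs to Γ_i},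 the pair ((F_x)_{x∈B}, Γ) is a continuous family of finite-dimensional Hilbert spaces over B. -/
/-- Sum of a locally finite family of continuous families of finite dimensional Hilbert
spaces: (a) each point lies in only finitely many supports, every element of the fiberwise
product has finitely many nonzero components, so the ℓ²-direct sum of the fibers coincides
with the full product and is finite dimensional; (b) taking as sections those elements all
of whose components are sections, one obtains a continuous family of finite dimensional
Hilbert spaces over `B`. -/
theorem sum_of_locallyFinite_continuousFamilies
    {B : Type*} [TopologicalSpace B] [LocallyCompactSpace B] [T2Space B]
    {I : Type*} {E : I → B → Type*}
    [∀ i x, NormedAddCommGroup (E i x)] [∀ i x, InnerProductSpace ℂ (E i x)]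
    [∀ i x, CompleteSpace (E i x)] [∀ i x, FiniteDimensional ℂ (E i x)]
    (Fam : ∀ i, ContinuousFamilyOfHilbertSpaces B (E i))
    (hlf : LocallyFinite fun i => {x : B | ∃ v : E i x, v ≠ 0}) :
    (∀ x : B, {i : I | ∃ v : E i x, v ≠ 0}.Finite) ∧
    (∀ (x : B) (v : ∀ i, E i x), {i : I | v i ≠ 0}.Finite) ∧
    (∀ (x : B) (v : ∀ i, E i x), Memℓp v 2) ∧
    (∀ x : B, FiniteDimensional ℂ (lp (fun i => E i x) 2)) ∧
    ∃ F : ContinuousFamilyOfHilbertSpaces B (fun x => lp (fun i => E i x) 2),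
      (F.Γ : Set (∀ x, lp (fun i => E i x) 2)) =
        {s | ∀ i : I, (fun x : B => (s x : ∀ j, E j x) i) ∈ (Fam i).Γ} := by
  have hpt : ∀ x : B, {i : I | ∃ v : E i x, v ≠ 0}.Finite := fun x => hlf.point_finite x
  have h2 : ∀ (x : B) (v : ∀ i, E i x), {i : I | v i ≠ 0}.Finite := fun x v =>
    (hpt x).subset fun i hi => ⟨v i, hi⟩
  have h3 : ∀ (x : B) (v : ∀ i, E i x), Memℓp v 2 := fun x v =>
    (memℓp_zero (h2 x v)).of_exponent_ge (by norm_num)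
  have htriv : ∀ (x : B) (i : I), i ∉ {i : I | ∃ v : E i x, v ≠ 0} → ∀ v : E i x, v = 0 := by
    intro x i hi v
    by_contra hv
    exact hi ⟨v, hv⟩
  have h4 : ∀ x : B, FiniteDimensional ℂ (lp (fun i => E i x) 2) := by
    intro x
    haveI := (hpt x).to_subtype
    let L : lp (fun i => E i x) 2 →ₗ[ℂ] ∀ i : {i : I | ∃ v : E i x, v ≠ 0}, E i x :=
      { toFun := fun f i => f i
        map_add' := fun f g => by ext i; exact congrFun (lp.coeFn_add f g) i
        map_smul' := fun c f => by ext i; exact congrFun (lp.coeFn_smul c f) i }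
    refine FiniteDimensional.of_injective L fun f g h => ?_
    apply lp.ext
    funext i
    by_cases hi : i ∈ {i : I | ∃ v : E i x, v ≠ 0}
    · exact congrFun h ⟨i, hi⟩
    · rw [htriv x i hi (f i), htriv x i hi (g i)]
  refine ⟨hpt, h2, h3, h4, ?_⟩
  set Γ : Submodule ℂ (∀ x, lp (fun i => E i x) 2) :=
    { carrier := {s | ∀ i : I, (fun x : B => (s x : ∀ j, E j x) i) ∈ (Fam i).Γ}
      add_mem' := by
        intro s t hs ht i
        have : (fun x : B => ((s + t) x : ∀ j, E j x) i)
            = (fun x : B => (s x : ∀ j, E j x) i) + fun x : B => (t x : ∀ j, E j x) i := by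
          funext x
          exact congrFun (lp.coeFn_add (s x) (t x)) i
        rw [this]
        exact Submodule.add_mem _ (hs i) (ht i)
      zero_mem' := by
        intro i
        have : (fun x : B => ((0 : ∀ x, lp (fun i => E i x) 2) x : ∀ j, E j x) i)
            = (0 : ∀ x : B, E i x) := by
          funext x
          exact congrFun (lp.coeFn_zero (fun i => E i x) 2) i
        rw [this]
        exact Submodule.zero_mem _
      smul_mem' := by
        intro c s hs i
        have : (fun x : B => ((c • s) x : ∀ j, E j x) i)
            = c • fun x : B => (s x : ∀ j, E j x) i := by
          funext x
          exact congrFun (lp.coeFn_smul c (s x)) i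
        rw [this]
        exact Submodule.smul_mem _ c (hs i) } with hΓ
  refine ⟨⟨Γ, ?_, ?_, ?_⟩, rfl⟩
  · -- exists_section
    intro x v
    choose t ht hx using fun i => (Fam i).exists_section x ((v : ∀ j, E j x) i)
    refine ⟨fun x' => (⟨fun i => t i x', h3 x' _⟩ : lp (fun i => E i x') 2), ?_, ?_⟩
    · intro i
      exact ht i
    · apply lp.ext
      funext i
      exact hx i
  · -- continuous_inner
    intro s₁ hs₁ s₂ hs₂
    rw [continuous_iff_continuousAt]
    intro x₀
    obtain ⟨U, hU, hfin⟩ := hlf x₀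
    classical
    have key : ∀ x ∈ U, (inner ℂ (s₁ x) (s₂ x) : ℂ)
        = ∑ i ∈ hfin.toFinset, inner ℂ ((s₁ x : ∀ j, E j x) i) ((s₂ x : ∀ j, E j x) i) := by
      intro x hx
      rw [lp.inner_eq_tsum]
      refine tsum_eq_sum ?_
      intro i hi
      rw [Set.Finite.mem_toFinset] at hi
      have hx' : x ∉ {x : B | ∃ v : E i x, v ≠ 0} := fun h => hi ⟨x, h, hx⟩
      rw [htriv x i hx' ((s₁ x : ∀ j, E j x) i), inner_zero_left]
    have hcont : Continuous fun x : B =>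
        ∑ i ∈ hfin.toFinset, (inner ℂ ((s₁ x : ∀ j, E j x) i) ((s₂ x : ∀ j, E j x) i) : ℂ) :=
      continuous_finset_sum _ fun i _ =>
        (Fam i).continuous_inner _ (hs₁ i) _ (hs₂ i)
    exact hcont.continuousAt.congr
      ((Filter.eventuallyEq_of_mem hU key).symm)
  · -- mem_of_approx
    intro w hw i
    apply (Fam i).mem_of_approx
    intro x ε hε
    obtain ⟨U, hU, s, hs, hclose⟩ := hw x ε hε
    refine ⟨U, hU, fun x' => (s x' : ∀ j, E j x') i, hs i, ?_⟩
    intro x' hx'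
    have h1 : ‖(s x' - w x') i‖ ≤ ‖s x' - w x'‖ :=
      lp.norm_apply_le_norm (by norm_num) (s x' - w x') i
    calc ‖(s x' : ∀ j, E j x') i - (w x' : ∀ j, E j x') i‖
        = ‖(s x' - w x') i‖ :=
          congrArg norm (congrFun (lp.coeFn_sub (s x') (w x')) i).symm
      _ ≤ ‖s x' - w x'‖ := h1
      _ < ε := hclose x' hx'
end
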